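/- arXiv:2206.11673 — 2 statements merged into one kernel-verified Lean document; each statement's English description precedes it below -/
import Mathlib

section
/- Suppose h : X → {0,1} is confident on Y over W in the sense that for each w with P[Y = g*(w) | W = w] > 1/2 we have P[h(X) = g*(w) | W = w] ≥ P[Y = g*(w) | W = w]. Then Cov(h(X), Y | W) ≤ Var(h(X) | W) ≤ Var(Y | W) almost surely. -/
/-!
Everything reduces to the laws of binary variables under `ν = P[· | W = w]`. For `A` with values
in `{0,1}` and `B` with values in `[0,1]`, `E[AB] ≤ min (E A) (E B)`, from which
`E[AB] - E[A] E[B] ≤ E[A] (1 - E[A]) = Var A` is elementary algebra. For a binary `f`,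
`Var f = s (1 - s)` with `s = P[f = c]` for either value `c`; taking `c = g*(w)`, confidence says
`1/2 < P[Y = c] ≤ P[h(X) = c]`, and `s ↦ s (1 - s)` decreases on `[1/2, 1]`.
-/

open MeasureTheory ProbabilityTheory

section Binary

variable {α : Type*} {f : α → ℝ}

lemma eq_indicator_of_binary (hf : ∀ a, f a = 0 ∨ f a = 1) :
    f = {a | f a = 1}.indicator 1 := by
  funext a
  rcases hf a with h | h <;> simp [h]

lemma mem_Icc_of_binary (hf : ∀ a, f a = 0 ∨ f a = 1) (a : α) :
    f a ∈ Set.Icc (0 : ℝ) 1 := by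
  rcases hf a with h | h <;> simp [h]

end Binary

section BinaryRandomVariable

variable {Ω : Type*} [MeasurableSpace Ω] {ν : Measure Ω} {f : Ω → ℝ}

lemma integral_eq_measureReal_of_binary (hmeas : Measurable f)
    (hf : ∀ ω, f ω = 0 ∨ f ω = 1) :
    ∫ ω, f ω ∂ν = ν.real {ω | f ω = 1} := by
  conv_lhs => rw [eq_indicator_of_binary hf]
  exact integral_indicator_one (hmeas (measurableSet_singleton 1))

lemma memLp_of_mem_Icc [IsFiniteMeasure ν] {p : ENNReal} (hmeas : Measurable f)
    (hf : ∀ ω, f ω ∈ Set.Icc (0 : ℝ) 1) : MemLp f p ν :=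
  MemLp.of_bound hmeas.aestronglyMeasurable 1 <| ae_of_all _ fun ω => by
    rw [Real.norm_eq_abs, abs_le]
    exact ⟨by linarith [(hf ω).1], (hf ω).2⟩

variable [IsProbabilityMeasure ν]

lemma variance_eq_measureReal_one_mul_of_binary (hmeas : Measurable f)
    (hf : ∀ ω, f ω = 0 ∨ f ω = 1) :
    variance f ν = ν.real {ω | f ω = 1} * (1 - ν.real {ω | f ω = 1}) := by
  have hsq : f ^ 2 = f := by
    funext ω
    rcases hf ω with h | h <;> simp [h]
  rw [variance_eq_sub (memLp_of_mem_Icc hmeas (mem_Icc_of_binary hf)), hsq,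
    integral_eq_measureReal_of_binary hmeas hf]
  ring

lemma variance_eq_measureReal_mul_of_binary {c : ℝ} (hmeas : Measurable f)
    (hf : ∀ ω, f ω = 0 ∨ f ω = 1) (hc : c = 0 ∨ c = 1) :
    variance f ν = ν.real {ω | f ω = c} * (1 - ν.real {ω | f ω = c}) := by
  rcases hc with rfl | rfl
  · have hzero : {ω | f ω = 0} = {ω | f ω = 1}ᶜ := by
      ext ω
      rcases hf ω with h | h <;> simp [h]
    have hone : MeasurableSet {ω | f ω = 1} := hmeas (measurableSet_singleton 1)
    rw [hzero, probReal_compl_eq_one_sub hone, variance_eq_measureReal_one_mul_of_binary hmeas hf]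
    ring
  · exact variance_eq_measureReal_one_mul_of_binary hmeas hf

lemma integral_mul_sub_le_variance_of_binary {g : Ω → ℝ} (hmeas : Measurable f)
    (hf : ∀ ω, f ω = 0 ∨ f ω = 1) (hgmeas : Measurable g)
    (hg : ∀ ω, g ω ∈ Set.Icc (0 : ℝ) 1) :
    ∫ ω, f ω * g ω ∂ν - (∫ ω, f ω ∂ν) * ∫ ω, g ω ∂ν ≤ variance f ν := by
  have hfI := mem_Icc_of_binary hf
  have hfint : Integrable f ν := (memLp_of_mem_Icc hmeas hfI).integrable le_rfl
  have hgint : Integrable g ν := (memLp_of_mem_Icc hgmeas hg).integrable le_rfl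
  have hfgI : ∀ ω, f ω * g ω ∈ Set.Icc (0 : ℝ) 1 := fun ω =>
    ⟨mul_nonneg (hfI ω).1 (hg ω).1, mul_le_one₀ (hfI ω).2 (hg ω).1 (hg ω).2⟩
  have hfgint : Integrable (fun ω => f ω * g ω) ν :=
    (memLp_of_mem_Icc (hmeas.mul hgmeas) hfgI).integrable le_rfl
  have hle_f : ∫ ω, f ω * g ω ∂ν ≤ ∫ ω, f ω ∂ν :=
    integral_mono hfgint hfint fun ω => mul_le_of_le_one_right (hfI ω).1 (hg ω).2
  have hle_g : ∫ ω, f ω * g ω ∂ν ≤ ∫ ω, g ω ∂ν :=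
    integral_mono hfgint hgint fun ω => mul_le_of_le_one_left (hg ω).1 (hfI ω).2
  have hq0 : 0 ≤ ν.real {ω | f ω = 1} := measureReal_nonneg
  have hq1 : ν.real {ω | f ω = 1} ≤ 1 := measureReal_le_one
  rw [variance_eq_measureReal_one_mul_of_binary hmeas hf]
  rw [integral_eq_measureReal_of_binary hmeas hf] at hle_f ⊢
  rcases le_total (∫ ω, g ω ∂ν) (ν.real {ω | f ω = 1}) with hgq | hqg <;> nlinarith

end BinaryRandomVariable

lemma eq_zero_or_eq_one_of_measure_ne_zero {Ω : Type*} [MeasurableSpace Ω]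
    {ν : Measure Ω} {f : Ω → ℝ} {c : ℝ} (hf : ∀ ω, f ω = 0 ∨ f ω = 1)
    (hc : ν {ω | f ω = c} ≠ 0) :
    c = 0 ∨ c = 1 := by
  obtain ⟨ω, rfl⟩ := nonempty_of_measure_ne_zero hc
  exact hf ω

theorem stmt8_general {Ω 𝓧 𝓦 : Type*} [MeasurableSpace Ω]
    (μ : Measure Ω) [IsProbabilityMeasure μ]
    (X : Ω → 𝓧) (W : Ω → 𝓦) (Y : Ω → ℝ) (h : 𝓧 → ℝ)
    (hYbin : ∀ ω, Y ω = 0 ∨ Y ω = 1) (hhbin : ∀ x, h x = 0 ∨ h x = 1)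
    (hYmeas : Measurable Y) (hhmeas : Measurable fun ω => h (X ω))
    (gstar : 𝓦 → ℝ)
    -- g*(w) is the strict conditional majority value of Y given W = w
    (hgstar : ∀ w, μ (W ⁻¹' {w}) ≠ 0 →
      (1 : ENNReal) / 2 < μ[|W ⁻¹' {w}] {ω | Y ω = gstar w})
    -- confidence: P[h(X) = g*(w) | W = w] ≥ P[Y = g*(w) | W = w]
    (hconf : ∀ w, μ (W ⁻¹' {w}) ≠ 0 →
      μ[|W ⁻¹' {w}] {ω | Y ω = gstar w} ≤ μ[|W ⁻¹' {w}] {ω | h (X ω) = gstar w}) :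
    ∀ w, μ (W ⁻¹' {w}) ≠ 0 →
      ((∫ ω, h (X ω) * Y ω ∂(μ[|W ⁻¹' {w}])
          - (∫ ω, h (X ω) ∂(μ[|W ⁻¹' {w}])) * ∫ ω, Y ω ∂(μ[|W ⁻¹' {w}]))
        ≤ variance (fun ω => h (X ω)) (μ[|W ⁻¹' {w}])) ∧
      variance (fun ω => h (X ω)) (μ[|W ⁻¹' {w}]) ≤ variance Y (μ[|W ⁻¹' {w}]) := by
  intro w hw
  have := cond_isProbabilityMeasure (μ := μ) hw
  have hhXbin : ∀ ω, h (X ω) = 0 ∨ h (X ω) = 1 := fun ω => hhbin (X ω)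
  refine ⟨integral_mul_sub_le_variance_of_binary hhmeas hhXbin hYmeas
    (mem_Icc_of_binary hYbin), ?_⟩
  have hmaj := hgstar w hw
  have hgbin := eq_zero_or_eq_one_of_measure_ne_zero hYbin (pos_of_gt hmaj).ne'
  have hmaj' : 1 / 2 < (μ[|W ⁻¹' {w}]).real {ω | Y ω = gstar w} := by
    rw [measureReal_def]
    simpa using (ENNReal.toReal_lt_toReal (by norm_num) (measure_ne_top _ _)).2 hmaj
  have hconf' : (μ[|W ⁻¹' {w}]).real {ω | Y ω = gstar w}
      ≤ (μ[|W ⁻¹' {w}]).real {ω | h (X ω) = gstar w} :=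
    ENNReal.toReal_mono (measure_ne_top _ _) (hconf w hw)
  have hle_one : (μ[|W ⁻¹' {w}]).real {ω | h (X ω) = gstar w} ≤ 1 := measureReal_le_one
  rw [variance_eq_measureReal_mul_of_binary hhmeas hhXbin hgbin,
    variance_eq_measureReal_mul_of_binary hYmeas hYbin hgbin]
  nlinarith

/-- If a binary classifier `h` is confident on `Y` over `W`
(`P[h(X) = g*(w) | W = w] ≥ P[Y = g*(w) | W = w] > 1/2` for each `w`), then conditionally
on every context `w`, `Cov(h(X), Y | W) ≤ Var(h(X) | W) ≤ Var(Y | W)`. -/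
theorem stmt8 {Ω 𝓧 𝓦 : Type*} [MeasurableSpace Ω] [Countable 𝓦]
    (μ : Measure Ω) [IsProbabilityMeasure μ]
    (X : Ω → 𝓧) (W : Ω → 𝓦) (Y : Ω → ℝ) (h : 𝓧 → ℝ)
    (hYbin : ∀ ω, Y ω = 0 ∨ Y ω = 1) (hhbin : ∀ x, h x = 0 ∨ h x = 1)
    (hYmeas : Measurable Y) (hhmeas : Measurable fun ω => h (X ω))
    (gstar : 𝓦 → ℝ)
    -- g*(w) is the strict conditional majority value of Y given W = w
    (hgstar : ∀ w, μ (W ⁻¹' {w}) ≠ 0 →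
      (1 : ENNReal) / 2 < μ[|W ⁻¹' {w}] {ω | Y ω = gstar w})
    -- confidence: P[h(X) = g*(w) | W = w] ≥ P[Y = g*(w) | W = w]
    (hconf : ∀ w, μ (W ⁻¹' {w}) ≠ 0 →
      μ[|W ⁻¹' {w}] {ω | Y ω = gstar w} ≤ μ[|W ⁻¹' {w}] {ω | h (X ω) = gstar w}) :
    ∀ w, μ (W ⁻¹' {w}) ≠ 0 →
      ((∫ ω, h (X ω) * Y ω ∂(μ[|W ⁻¹' {w}])
          - (∫ ω, h (X ω) ∂(μ[|W ⁻¹' {w}])) * ∫ ω, Y ω ∂(μ[|W ⁻¹' {w}]))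
        ≤ variance (fun ω => h (X ω)) (μ[|W ⁻¹' {w}])) ∧
      variance (fun ω => h (X ω)) (μ[|W ⁻¹' {w}]) ≤ variance Y (μ[|W ⁻¹' {w}]) :=
  stmt8_general μ X W Y h hYbin hhbin hYmeas hhmeas gstar hgstar hconf
end

section
/- A predictor h : X → [0,1] that is both a pure forward predictor (h(X) ⊥ W) and satisfies the first weak calibration condition E[h(X) | W] = E[Y | W] almost surely must satisfy E[Y | W] = E[Y] almost surely; hence if E[Y | W] is non-constant, no forward predictor is weakly calibrated to Y over W. -/
/-!
Independence of `h(X)` and `W` means that conditioning on a fiber `{W = w}` does not change the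
law of `h(X)`, so `E[h(X) | W = w] = E[h(X)]` on every non-null fiber. Calibration transfers this
constant to `E[Y | W = w]`, and the law of total expectation over the countably many fibers of `W`
identifies the constant with `E[Y]`.
-/

open MeasureTheory ProbabilityTheory

section TotalExpectation

variable {Ω β E : Type*} [MeasurableSpace Ω] {μ : Measure Ω}
  [NormedAddCommGroup E] [NormedSpace ℝ E]

theorem setIntegral_eq_measureReal_smul_integral_cond {s : Set Ω} (hs : μ s ≠ ⊤) (f : Ω → E) :
    ∫ ω in s, f ω ∂μ = μ.real s • ∫ ω, f ω ∂μ[|s] := by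
  rcases eq_or_ne (μ s) 0 with hs₀ | hs₀
  · simp [Measure.restrict_eq_zero.mpr hs₀, measureReal_def, hs₀]
  · rw [ProbabilityTheory.cond, integral_smul_measure, smul_smul, ENNReal.toReal_inv,
      measureReal_def, mul_inv_cancel₀ (ENNReal.toReal_ne_zero.mpr ⟨hs₀, hs⟩), one_smul]

variable [MeasurableSpace β] [Countable β] [MeasurableSingletonClass β] {W : Ω → β}

theorem integral_eq_tsum_setIntegral_preimage_singleton (hW : Measurable W) {f : Ω → E}
    (hf : Integrable f μ) :
    ∫ ω, f ω ∂μ = ∑' w, ∫ ω in W ⁻¹' {w}, f ω ∂μ := by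
  have hcover : (⋃ w, W ⁻¹' {w}) = Set.univ := by
    rw [← Set.preimage_iUnion, Set.iUnion_of_singleton, Set.preimage_univ]
  rw [← setIntegral_univ, ← hcover]
  exact integral_iUnion (fun w => hW (measurableSet_singleton w)) (pairwise_disjoint_fiber W)
    (hcover ▸ hf.integrableOn)

theorem integral_eq_of_forall_integral_cond_preimage_singleton_eq [IsProbabilityMeasure μ]
    [CompleteSpace E] (hW : Measurable W) {f : Ω → E} (hf : Integrable f μ) {c : E}
    (hc : ∀ w, μ (W ⁻¹' {w}) ≠ 0 → ∫ ω, f ω ∂μ[|W ⁻¹' {w}] = c) :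
    ∫ ω, f ω ∂μ = c := by
  calc ∫ ω, f ω ∂μ = ∑' w, ∫ ω in W ⁻¹' {w}, f ω ∂μ :=
        integral_eq_tsum_setIntegral_preimage_singleton hW hf
    _ = ∑' w, ∫ _ in W ⁻¹' {w}, c ∂μ := by
        refine tsum_congr fun w => ?_
        rw [setIntegral_eq_measureReal_smul_integral_cond (measure_ne_top _ _), setIntegral_const]
        rcases eq_or_ne (μ (W ⁻¹' {w})) 0 with hw | hw
        · simp [measureReal_def, hw]
        · rw [hc w hw]
    _ = c := by
        rw [← integral_eq_tsum_setIntegral_preimage_singleton hW (integrable_const c),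
          integral_const, probReal_univ, one_smul]

end TotalExpectation

namespace ProbabilityTheory.IndepFun

variable {Ω β γ E : Type*} [MeasurableSpace Ω] {μ : Measure Ω} [IsFiniteMeasure μ]
  [MeasurableSpace β] [MeasurableSpace γ] {f : Ω → β} {g : Ω → γ} {s : Set γ}

theorem map_cond_preimage (hfg : f ⟂ᵢ[μ] g) (hf : Measurable f) (hs : MeasurableSet s)
    (hμs : μ (g ⁻¹' s) ≠ 0) :
    (μ[|g ⁻¹' s]).map f = μ.map f := by
  ext t ht
  rw [Measure.map_apply hf ht, Measure.map_apply hf ht, cond_apply' (hf ht), Set.inter_comm,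
    hfg.measure_inter_preimage_eq_mul _ _ ht hs, mul_comm (μ _),
    ENNReal.inv_mul_cancel_left hμs (measure_ne_top _ _)]

theorem integral_comp_cond_preimage [NormedAddCommGroup E] [NormedSpace ℝ E] (hfg : f ⟂ᵢ[μ] g)
    (hf : Measurable f) (hs : MeasurableSet s) (hμs : μ (g ⁻¹' s) ≠ 0) {φ : β → E}
    (hφ : AEStronglyMeasurable φ (μ.map f)) :
    ∫ ω, φ (f ω) ∂μ[|g ⁻¹' s] = ∫ ω, φ (f ω) ∂μ := by
  have hmap := hfg.map_cond_preimage hf hs hμs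
  rw [← integral_map hf.aemeasurable (hmap ▸ hφ), hmap, integral_map hf.aemeasurable hφ]

end ProbabilityTheory.IndepFun

theorem stmt15_general {Ω 𝓧 𝓦 : Type*} [MeasurableSpace Ω]
    [MeasurableSpace 𝓦] [Countable 𝓦] [MeasurableSingletonClass 𝓦]
    (μ : Measure Ω) [IsProbabilityMeasure μ]
    (X : Ω → 𝓧) (W : Ω → 𝓦) (Y : Ω → ℝ) (h : 𝓧 → ℝ)
    (hY01 : ∀ ω, Y ω ∈ Set.Icc (0 : ℝ) 1)
    (hYmeas : Measurable Y) (hhmeas : Measurable fun ω => h (X ω))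
    (hWmeas : Measurable W)
    -- pure forward predictor: h(X) is independent of W
    (hind : IndepFun (fun ω => h (X ω)) W μ)
    -- first weak calibration condition: E[h(X) | W] = E[Y | W]
    (hcal : ∀ w, μ (W ⁻¹' {w}) ≠ 0 →
      ∫ ω, h (X ω) ∂(μ[|W ⁻¹' {w}]) = ∫ ω, Y ω ∂(μ[|W ⁻¹' {w}])) :
    ∀ w, μ (W ⁻¹' {w}) ≠ 0 →
      ∫ ω, Y ω ∂(μ[|W ⁻¹' {w}]) = ∫ ω, Y ω ∂μ := by
  have hYint : Integrable Y μ := .of_mem_Icc 0 1 hYmeas.aemeasurable (.of_forall hY01)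
  have hYcond : ∀ w, μ (W ⁻¹' {w}) ≠ 0 →
      ∫ ω, Y ω ∂(μ[|W ⁻¹' {w}]) = ∫ ω, h (X ω) ∂μ := fun w hw =>
    (hcal w hw).symm.trans <| hind.integral_comp_cond_preimage (φ := id) hhmeas
      (measurableSet_singleton w) hw aestronglyMeasurable_id
  intro w hw
  rw [hYcond w hw, integral_eq_of_forall_integral_cond_preimage_singleton_eq hWmeas hYint hYcond]

/-- A predictor `h : X → [0,1]` that is a pure forward predictor (`h(X) ⊥ W`) and satisfies
the first weak calibration condition `E[h(X) | W] = E[Y | W]` forces `E[Y | W] = E[Y]`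
almost surely; hence if `E[Y|W]` is non-constant, no forward predictor is weakly
calibrated to `Y` over `W`. -/
theorem stmt15 {Ω 𝓧 𝓦 : Type*} [MeasurableSpace Ω]
    [MeasurableSpace 𝓦] [Countable 𝓦] [MeasurableSingletonClass 𝓦]
    (μ : Measure Ω) [IsProbabilityMeasure μ]
    (X : Ω → 𝓧) (W : Ω → 𝓦) (Y : Ω → ℝ) (h : 𝓧 → ℝ)
    (hY01 : ∀ ω, Y ω ∈ Set.Icc (0 : ℝ) 1) (hh01 : ∀ x, h x ∈ Set.Icc (0 : ℝ) 1)
    (hYmeas : Measurable Y) (hhmeas : Measurable fun ω => h (X ω))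
    (hWmeas : Measurable W)
    -- pure forward predictor: h(X) is independent of W
    (hind : IndepFun (fun ω => h (X ω)) W μ)
    -- first weak calibration condition: E[h(X) | W] = E[Y | W]
    (hcal : ∀ w, μ (W ⁻¹' {w}) ≠ 0 →
      ∫ ω, h (X ω) ∂(μ[|W ⁻¹' {w}]) = ∫ ω, Y ω ∂(μ[|W ⁻¹' {w}])) :
    ∀ w, μ (W ⁻¹' {w}) ≠ 0 →
      ∫ ω, Y ω ∂(μ[|W ⁻¹' {w}]) = ∫ ω, Y ω ∂μ :=
  stmt15_general μ X W Y h hY01 hYmeas hhmeas hWmeas hind hcal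
end
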